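/- arXiv:2001.00362 — 2 statements merged into one kernel-verified Lean document; each statement's English description precedes it below -/
import Mathlib

section
/- Discrete Gronwall inequality: let (r^m), (s^m), (p^m), (y^m) be sequences of nonnegative reals with (r⁰)² + (s⁰)² ≤ (p⁰)², and suppose for all m ≥ 1 that (r^m)² + (s^m)² ≤ ∑_{j=0}^{m-1} (y^j)²(r^j)² + ∑_{j=0}^{m} (p^j)². Then for all m ≥ 1, (r^m)² + (s^m)² ≤ exp(∑_{j=0}^{m-1} (y^j)²) · ∑_{j=0}^{m} (p^j)². -/
namespace Paper

open Finset

/-- The partial sums `S n = ∑_{j<n} a j * u j + B n` satisfy the recursive inequality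
`S (n + 1) ≤ (1 + a n) * S n + (B (n + 1) - B n)`, to which the library's discrete Grönwall
inequality applies; the increments of `B` then telescope back to `B n`. -/
theorem le_exp_sum_mul_of_le_sum_mul_add {u a B : ℕ → ℝ} (ha : ∀ n, 0 ≤ a n)
    (hB : Monotone B) (hB₀ : 0 ≤ B 0) (hu : ∀ n, u n ≤ ∑ j ∈ range n, a j * u j + B n)
    (n : ℕ) : u n ≤ Real.exp (∑ j ∈ range n, a j) * B n := by
  set S : ℕ → ℝ := fun n ↦ ∑ j ∈ range n, a j * u j + B n with hS
  have hS_succ (n : ℕ) : S (n + 1) ≤ (1 + a n) * S n + (B (n + 1) - B n) := by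
    have := mul_le_mul_of_nonneg_left (hu n) (ha n)
    simp only [hS, sum_range_succ]
    linarith
  have hS_le := _root_.discrete_gronwall (u := S) (n₀ := 0) (by simpa [hS] using hB₀)
    (fun n _ ↦ hS_succ n) (fun n _ ↦ ha n) (fun n _ ↦ sub_nonneg.2 (hB n.le_succ)) n.zero_le
  rw [← range_eq_Ico, sum_range_sub] at hS_le
  calc u n ≤ S n := hu n
    _ ≤ _ := hS_le
    _ = _ := by simp [hS, mul_comm]

theorem discrete_gronwall_general (r s p y : ℕ → ℝ)
    (h0 : (r 0) ^ 2 + (s 0) ^ 2 ≤ (p 0) ^ 2)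
    (hrec : ∀ m : ℕ, 1 ≤ m →
      (r m) ^ 2 + (s m) ^ 2 ≤
        ∑ j ∈ Finset.range m, (y j) ^ 2 * (r j) ^ 2 +
        ∑ j ∈ Finset.range (m + 1), (p j) ^ 2) :
    ∀ m : ℕ, 1 ≤ m →
      (r m) ^ 2 + (s m) ^ 2 ≤
        Real.exp (∑ j ∈ Finset.range m, (y j) ^ 2) *
          ∑ j ∈ Finset.range (m + 1), (p j) ^ 2 := by
  have hu (m : ℕ) : r m ^ 2 + s m ^ 2 ≤
      ∑ j ∈ range m, y j ^ 2 * (r j ^ 2 + s j ^ 2) + ∑ j ∈ range (m + 1), p j ^ 2 := by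
    rcases Nat.eq_zero_or_pos m with rfl | hm
    · simpa using h0
    · refine (hrec m hm).trans (add_le_add_left (sum_le_sum fun j _ ↦ ?_) _)
      gcongr
      exact le_add_of_nonneg_right (sq_nonneg _)
  have hP : Monotone fun m ↦ ∑ j ∈ range (m + 1), p j ^ 2 :=
    monotone_nat_of_le_succ fun m ↦ by
      simpa [sum_range_succ _ (m + 1)] using sq_nonneg (p (m + 1))
  exact fun m _ ↦ le_exp_sum_mul_of_le_sum_mul_add (fun j ↦ sq_nonneg (y j)) hP
    (by positivity) hu m

theorem discrete_gronwall (r s p y : ℕ → ℝ)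
    (hr : ∀ n, 0 ≤ r n) (hs : ∀ n, 0 ≤ s n) (hp : ∀ n, 0 ≤ p n) (hy : ∀ n, 0 ≤ y n)
    (h0 : (r 0) ^ 2 + (s 0) ^ 2 ≤ (p 0) ^ 2)
    (hrec : ∀ m : ℕ, 1 ≤ m →
      (r m) ^ 2 + (s m) ^ 2 ≤
        ∑ j ∈ Finset.range m, (y j) ^ 2 * (r j) ^ 2 +
        ∑ j ∈ Finset.range (m + 1), (p j) ^ 2) :
    ∀ m : ℕ, 1 ≤ m →
      (r m) ^ 2 + (s m) ^ 2 ≤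
        Real.exp (∑ j ∈ Finset.range m, (y j) ^ 2) *
          ∑ j ∈ Finset.range (m + 1), (p j) ^ 2 :=
  discrete_gronwall_general r s p y h0 hrec

end Paper
end

section
/- Coercivity of the coupled operator: under the same hypotheses, with γ = min(μ₁,ν₁), for every (B,N) ∈ H, (L(B,N),(B,N)) ≥ (1 − Δt M)(‖B‖₀² + ‖N‖₀²) + Δt γ(‖B‖₁² + ‖N‖₁²). Hence if either γ > 2MC_PF² or Δt < C_PF²/(2MC_PF² − γ), then (L(B,N),(B,N))/‖(B,N)‖_H → ∞ as ‖(B,N)‖_H → ∞. -/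
/-!
Each component of `(L(B,N),(B,N))` is bounded below by `(1 - Δt M)‖·‖₀² + Δt γ ‖·‖₁²`, since the
reaction term costs at most `Δt M ‖·‖₀²`. If `1 - Δt M < 0`, Poincaré's inequality
`‖·‖₀² ≤ C_PF² ‖·‖₁²` turns the (negative) `L²` part into an `H¹` one, so in all cases the form
dominates `min(Δt γ, (1 - Δt M) C_PF² + Δt γ) ‖(B,N)‖_H²`; either condition of the theorem makes
this constant positive, and a positive multiple of `s²` eventually beats every `C s`.
-/

theorem component_energy_lower_bound {q f a n x Δt M γ : ℝ} (hΔt : 0 ≤ Δt) (hq : n ^ 2 = q)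
    (hf : |f| ≤ M * n * n) (ha : γ * x ^ 2 ≤ a) :
    (1 - Δt * M) * n ^ 2 + Δt * γ * x ^ 2 ≤ q - Δt * f + Δt * a := by
  have hreaction : Δt * f ≤ Δt * (M * n * n) :=
    mul_le_mul_of_nonneg_left (abs_le.mp hf).2 hΔt
  have hdiffusion : Δt * (γ * x ^ 2) ≤ Δt * a := mul_le_mul_of_nonneg_left ha hΔt
  nlinarith

theorem min_mul_le_mul_add_mul {a b c X Y : ℝ} (hX : 0 ≤ X) (hXY : X ≤ c * Y) (hY : 0 ≤ Y) :
    min b (a * c + b) * Y ≤ a * X + b * Y := by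
  rcases le_or_gt 0 a with ha | ha
  · calc min b (a * c + b) * Y ≤ b * Y := mul_le_mul_of_nonneg_right (min_le_left _ _) hY
      _ ≤ a * X + b * Y := le_add_of_nonneg_left (mul_nonneg ha hX)
  · calc min b (a * c + b) * Y ≤ (a * c + b) * Y :=
          mul_le_mul_of_nonneg_right (min_le_right _ _) hY
      _ = a * (c * Y) + b * Y := by ring
      _ ≤ a * X + b * Y := by gcongr ?_ + _; exact mul_le_mul_of_nonpos_left hXY ha.le

theorem coercivity_margin_pos {Δt M γ c : ℝ} (hΔt : 0 < Δt) (hM : 0 ≤ M) (hγ : 0 < γ)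
    (hc : 0 ≤ c) (h : γ > 2 * M * c ∨ Δt < c / (2 * M * c - γ)) :
    0 < (1 - Δt * M) * c + Δt * γ := by
  rcases h with h | h
  · nlinarith [mul_nonneg hM hc]
  · rcases le_or_gt (2 * M * c - γ) 0 with hd | hd
    · linarith [div_nonpos_of_nonneg_of_nonpos hc hd]
    · have : Δt * (2 * M * c - γ) < c := (lt_div_iff₀ hd).mp h
      nlinarith [mul_nonneg hΔt.le (mul_nonneg hM hc)]

theorem mul_le_mul_sq_of_div_le {C ε s : ℝ} (hε : 0 < ε) (hs : 0 ≤ s) (h : C / ε ≤ s) :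
    C * s ≤ ε * s ^ 2 :=
  calc C * s ≤ (s * ε) * s := mul_le_mul_of_nonneg_right ((div_le_iff₀ hε).mp h) hs
    _ = ε * s ^ 2 := by ring

/-- `V` stands for `H¹₀(Ω)` with `‖v‖ = ‖∇v‖₀`; `inner0`, `norm0` are the `L²` inner product and
norm; `fF B N ψ = (F(B,N),ψ)₀` and `fG B N χ = (G(B,N),χ)₀`, whose bounds `hF`, `hG` come from
Lipschitz continuity together with `F(0,N) = 0` and `G(B,0) = 0`. -/
theorem coupled_operator_coercivity_general
    {V : Type*} [NormedAddCommGroup V]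
    (inner0 : V → V → ℝ) (norm0 : V → ℝ) (aB aN : V → V → ℝ) (fF fG : V → V → V → ℝ)
    (Δt M μ₁ ν₁ CPF : ℝ)
    (hΔt : 0 < Δt) (hM : 0 ≤ M) (hμ₁ : 0 < μ₁) (hν₁ : 0 < ν₁)
    (hnorm0 : ∀ v, norm0 v ^ 2 = inner0 v v) (hnorm0nn : ∀ v, 0 ≤ norm0 v)
    (hPF : ∀ v, norm0 v ≤ CPF * ‖v‖)
    (haB : ∀ v, μ₁ * ‖v‖ ^ 2 ≤ aB v v) (haN : ∀ v, ν₁ * ‖v‖ ^ 2 ≤ aN v v)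
    (hF : ∀ B N ψ, |fF B N ψ| ≤ M * norm0 B * norm0 ψ)
    (hG : ∀ B N χ, |fG B N χ| ≤ M * norm0 N * norm0 χ) :
    (∀ B N : V,
      inner0 B B - Δt * fF B N B + Δt * aB B B +
        inner0 N N - Δt * fG B N N + Δt * aN N N ≥
      (1 - Δt * M) * (norm0 B ^ 2 + norm0 N ^ 2) +
        Δt * min μ₁ ν₁ * (‖B‖ ^ 2 + ‖N‖ ^ 2)) ∧
    ((min μ₁ ν₁ > 2 * M * CPF ^ 2 ∨ Δt < CPF ^ 2 / (2 * M * CPF ^ 2 - min μ₁ ν₁)) →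
      ∀ C : ℝ, ∃ R : ℝ, ∀ B N : V,
        R ≤ Real.sqrt (‖B‖ ^ 2 + ‖N‖ ^ 2) →
        C * Real.sqrt (‖B‖ ^ 2 + ‖N‖ ^ 2) ≤
          inner0 B B - Δt * fF B N B + Δt * aB B B +
            inner0 N N - Δt * fG B N N + Δt * aN N N) := by
  set γ := min μ₁ ν₁
  have hγ : 0 < γ := lt_min hμ₁ hν₁
  have energy : ∀ B N : V,
      inner0 B B - Δt * fF B N B + Δt * aB B B +
        inner0 N N - Δt * fG B N N + Δt * aN N N ≥
      (1 - Δt * M) * (norm0 B ^ 2 + norm0 N ^ 2) + Δt * γ * (‖B‖ ^ 2 + ‖N‖ ^ 2) := by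
    intro B N
    have hB := component_energy_lower_bound hΔt.le (hnorm0 B) (hF B N B)
      ((mul_le_mul_of_nonneg_right (min_le_left μ₁ ν₁) (by positivity)).trans (haB B))
    have hN := component_energy_lower_bound hΔt.le (hnorm0 N) (hG B N N)
      ((mul_le_mul_of_nonneg_right (min_le_right μ₁ ν₁) (by positivity)).trans (haN N))
    linarith
  refine ⟨energy, fun hcond C => ?_⟩
  set ε := min (Δt * γ) ((1 - Δt * M) * CPF ^ 2 + Δt * γ)
  have hε : 0 < ε :=
    lt_min (mul_pos hΔt hγ) (coercivity_margin_pos hΔt hM hγ (sq_nonneg CPF) hcond)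
  have poincare_sq : ∀ v, norm0 v ^ 2 ≤ CPF ^ 2 * ‖v‖ ^ 2 := fun v => by
    rw [← mul_pow]; exact pow_le_pow_left₀ (hnorm0nn v) (hPF v) 2
  refine ⟨C / ε, fun B N hR => ?_⟩
  have hsq : Real.sqrt (‖B‖ ^ 2 + ‖N‖ ^ 2) ^ 2 = ‖B‖ ^ 2 + ‖N‖ ^ 2 :=
    Real.sq_sqrt (by positivity)
  calc C * Real.sqrt (‖B‖ ^ 2 + ‖N‖ ^ 2)
      ≤ ε * Real.sqrt (‖B‖ ^ 2 + ‖N‖ ^ 2) ^ 2 :=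
        mul_le_mul_sq_of_div_le hε (Real.sqrt_nonneg _) hR
    _ = ε * (‖B‖ ^ 2 + ‖N‖ ^ 2) := by rw [hsq]
    _ ≤ (1 - Δt * M) * (norm0 B ^ 2 + norm0 N ^ 2) + Δt * γ * (‖B‖ ^ 2 + ‖N‖ ^ 2) :=
        min_mul_le_mul_add_mul (by positivity)
          (by linarith [poincare_sq B, poincare_sq N]) (by positivity)
    _ ≤ _ := energy B N

/-- Coercivity of the coupled operator `L`. Same abstract setting as the
monotonicity lemma: `V` models `H¹₀(Ω)` with `‖·‖ = ‖·‖₁ = ‖∇·‖₀`; `inner0` is the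
`L²` inner product with norm `norm0` (Poincaré: `norm0 v ≤ C_PF ‖v‖`);
`aB, aN` are the diffusion forms with lower bounds `μ₁, ν₁`;
`fF B N ψ = (F(B,N),ψ)₀`, `fG B N χ = (G(B,N),χ)₀` satisfy, thanks to
`F(0,N) = 0`, `G(B,0) = 0` and Lipschitz continuity with constant `M`,
`|fF B N ψ| ≤ M ‖B‖₀ ‖ψ‖₀` and `|fG B N χ| ≤ M ‖N‖₀ ‖χ‖₀`.
Then `(L(B,N),(B,N)) ≥ (1 − Δt M)(‖B‖₀² + ‖N‖₀²) + Δt γ (‖B‖₁² + ‖N‖₁²)` with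
`γ = min(μ₁,ν₁)`; hence if `γ > 2MC_PF²` or `Δt < C_PF²/(2MC_PF² − γ)`, the quotient
`(L(B,N),(B,N))/‖(B,N)‖_H` tends to `∞` as `‖(B,N)‖_H → ∞`. -/
theorem coupled_operator_coercivity
    {V : Type*} [NormedAddCommGroup V] [InnerProductSpace ℝ V]
    (inner0 : V → V → ℝ) (norm0 : V → ℝ) (aB aN : V → V → ℝ) (fF fG : V → V → V → ℝ)
    (Δt M μ₁ ν₁ CPF : ℝ)
    (hΔt : 0 < Δt) (hM : 0 ≤ M) (hμ₁ : 0 < μ₁) (hν₁ : 0 < ν₁) (hCPF : 0 < CPF)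
    (hnorm0 : ∀ v, norm0 v ^ 2 = inner0 v v) (hnorm0nn : ∀ v, 0 ≤ norm0 v)
    (hPF : ∀ v, norm0 v ≤ CPF * ‖v‖)
    (haB : ∀ v, μ₁ * ‖v‖ ^ 2 ≤ aB v v) (haN : ∀ v, ν₁ * ‖v‖ ^ 2 ≤ aN v v)
    (hF : ∀ B N ψ, |fF B N ψ| ≤ M * norm0 B * norm0 ψ)
    (hG : ∀ B N χ, |fG B N χ| ≤ M * norm0 N * norm0 χ) :
    (∀ B N : V,
      inner0 B B - Δt * fF B N B + Δt * aB B B +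
        inner0 N N - Δt * fG B N N + Δt * aN N N ≥
      (1 - Δt * M) * (norm0 B ^ 2 + norm0 N ^ 2) +
        Δt * min μ₁ ν₁ * (‖B‖ ^ 2 + ‖N‖ ^ 2)) ∧
    ((min μ₁ ν₁ > 2 * M * CPF ^ 2 ∨ Δt < CPF ^ 2 / (2 * M * CPF ^ 2 - min μ₁ ν₁)) →
      ∀ C : ℝ, ∃ R : ℝ, ∀ B N : V,
        R ≤ Real.sqrt (‖B‖ ^ 2 + ‖N‖ ^ 2) →
        C * Real.sqrt (‖B‖ ^ 2 + ‖N‖ ^ 2) ≤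
          inner0 B B - Δt * fF B N B + Δt * aB B B +
            inner0 N N - Δt * fG B N N + Δt * aN N N) :=
  coupled_operator_coercivity_general inner0 norm0 aB aN fF fG Δt M μ₁ ν₁ CPF hΔt hM hμ₁ hν₁ hnorm0
    hnorm0nn hPF haB haN hF hG
end
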